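/- arXiv:2601.00544 — 2 statements merged into one kernel-verified Lean document; each statement's English description precedes it below -/
import Mathlib

section
/- Let 𝒜 be a finite central hyperplane arrangement in a finite-dimensional ℂ-vector space V and Y a 1-dimensional subspace. If X + Y ∈ L(𝒜) for all X ∈ L(𝒜) of rank 2 (codimension 2), then X + Y ∈ L(𝒜) for all X ∈ L(𝒜). (Proved by induction on the number of hyperplanes cutting out X.) -/
open Module

section Aux

variable {V : Type*} [AddCommGroup V] [Module ℂ V] [FiniteDimensional ℂ V]

private lemma aux_inf_hyp_le {W K : Submodule ℂ V} (hK : finrank ℂ ↥K + 1 = finrank ℂ V) :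
    finrank ℂ ↥W ≤ finrank ℂ ↥(W ⊓ K) + 1 := by
  have h := Submodule.finrank_sup_add_finrank_inf_eq W K
  have h2 : finrank ℂ ↥(W ⊔ K) ≤ finrank ℂ V := Submodule.finrank_le _
  omega

private lemma aux_inf_hyp_eq {W K : Submodule ℂ V} (hK : finrank ℂ ↥K + 1 = finrank ℂ V)
    (hle : ¬ W ≤ K) : finrank ℂ ↥(W ⊓ K) + 1 = finrank ℂ ↥W := by
  have h := Submodule.finrank_sup_add_finrank_inf_eq W K
  have htop : W ⊔ K = ⊤ := by
    apply Submodule.eq_top_of_finrank_eq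
    have hlt : K < W ⊔ K := lt_of_le_of_ne le_sup_right (fun he => hle (he ▸ le_sup_left))
    have := Submodule.finrank_lt_finrank_of_lt hlt
    have := Submodule.finrank_le (W ⊔ K)
    omega
  rw [htop, finrank_top] at h
  omega

private lemma aux_sup_line {W Y : Submodule ℂ V} (hY : finrank ℂ ↥Y = 1) (hle : ¬ Y ≤ W) :
    finrank ℂ ↥(W ⊔ Y) = finrank ℂ ↥W + 1 := by
  have h := Submodule.finrank_sup_add_finrank_inf_eq W Y
  have h1 : finrank ℂ ↥(W ⊓ Y) ≤ 1 := hY ▸ Submodule.finrank_mono inf_le_right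
  have h0 : finrank ℂ ↥(W ⊓ Y) ≠ 1 := by
    intro he
    exact hle ((Submodule.eq_of_le_of_finrank_eq inf_le_right (he.trans hY.symm)) ▸ inf_le_left)
  omega

/-- From an intersection of hyperplanes one can extract a sub-intersection of any
intermediate codimension. -/
private lemma aux_chain {𝒜 : Set (Submodule ℂ V)}
    (hhyp : ∀ H ∈ 𝒜, finrank ℂ ↥H + 1 = finrank ℂ V) :
    ∀ s : Finset (Submodule ℂ V), ↑s ⊆ 𝒜 → ∀ k : ℕ,
      finrank ℂ ↥(sInf (↑s : Set (Submodule ℂ V))) ≤ k → k ≤ finrank ℂ V →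
      ∃ t : Finset (Submodule ℂ V), t ⊆ s ∧
        finrank ℂ ↥(sInf (↑t : Set (Submodule ℂ V))) = k := by
  classical
  intro s
  induction s using Finset.induction_on with
  | empty =>
    intro _ k hk1 hk2
    refine ⟨∅, Finset.Subset.refl _, ?_⟩
    rw [Finset.coe_empty, sInf_empty, finrank_top] at hk1 ⊢
    omega
  | @insert a s ha ih =>
    intro hsub k hk1 hk2
    have hssub : ↑s ⊆ 𝒜 := fun x hx => hsub (Finset.mem_insert_of_mem hx)
    have ha𝒜 : a ∈ 𝒜 := hsub (Finset.mem_insert_self a s)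
    by_cases hc : finrank ℂ ↥(sInf (↑s : Set (Submodule ℂ V))) ≤ k
    · obtain ⟨t, hts, ht⟩ := ih hssub k hc hk2
      exact ⟨t, hts.trans (Finset.subset_insert a s), ht⟩
    · refine ⟨insert a s, Finset.Subset.refl _, ?_⟩
      have heq : sInf (↑(insert a s) : Set (Submodule ℂ V)) =
          a ⊓ sInf (↑s : Set (Submodule ℂ V)) := by
        rw [Finset.coe_insert, sInf_insert]
      have h1 := aux_inf_hyp_le (W := sInf (↑s : Set (Submodule ℂ V))) (hhyp a ha𝒜)
      rw [heq] at hk1 ⊢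
      rw [inf_comm] at hk1 ⊢
      omega

/-- Given a hyperplane `H`, any intersection-with-`H` of a finite family of hyperplanes can
be rewritten as `X' ⊓ H` where `X'` is an intersection of a subfamily and `X'` is not
contained in `H` (the rank drops by exactly one when intersecting with `H`). -/
private lemma aux_extract {𝒜 : Set (Submodule ℂ V)}
    (hhyp : ∀ H ∈ 𝒜, finrank ℂ ↥H + 1 = finrank ℂ V)
    {H : Submodule ℂ V} (hH : finrank ℂ ↥H + 1 = finrank ℂ V) :
    ∀ s : Finset (Submodule ℂ V), ↑s ⊆ 𝒜 →
      ∃ t : Finset (Submodule ℂ V), t ⊆ s ∧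
        sInf (↑t : Set (Submodule ℂ V)) ⊓ H = sInf (↑s : Set (Submodule ℂ V)) ⊓ H ∧
        finrank ℂ ↥(sInf (↑t : Set (Submodule ℂ V)) ⊓ H) + 1 =
          finrank ℂ ↥(sInf (↑t : Set (Submodule ℂ V))) := by
  classical
  intro s
  induction s using Finset.induction_on with
  | empty =>
    intro _
    refine ⟨∅, Finset.Subset.refl _, rfl, ?_⟩
    rw [Finset.coe_empty, sInf_empty, top_inf_eq, finrank_top]
    exact hH
  | @insert K s hK ih =>
    intro hsub
    have hssub : ↑s ⊆ 𝒜 := fun x hx => hsub (Finset.mem_insert_of_mem hx)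
    have hK𝒜 : K ∈ 𝒜 := hsub (Finset.mem_insert_self K s)
    obtain ⟨t, hts, h1, h2⟩ := ih hssub
    have hins : sInf (↑(insert K s) : Set (Submodule ℂ V)) =
        K ⊓ sInf (↑s : Set (Submodule ℂ V)) := by rw [Finset.coe_insert, sInf_insert]
    set A := sInf (↑t : Set (Submodule ℂ V)) with hA
    by_cases hc : A ⊓ H ≤ K
    · refine ⟨t, hts.trans (Finset.subset_insert K s), ?_, h2⟩
      rw [hins, inf_assoc, ← h1, inf_eq_right.mpr hc]
    · refine ⟨insert K t, Finset.insert_subset_insert K hts, ?_, ?_⟩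
      · rw [Finset.coe_insert, sInf_insert, hins, inf_assoc, inf_assoc, h1]
      · have hAK : ¬ A ≤ K := fun h => hc (inf_le_left.trans h)
        have e1 := aux_inf_hyp_eq (hhyp K hK𝒜) hc
        have e2 := aux_inf_hyp_eq (hhyp K hK𝒜) hAK
        have hre : sInf (↑(insert K t) : Set (Submodule ℂ V)) = K ⊓ A := by
          rw [Finset.coe_insert, sInf_insert]
        rw [hre]
        have : K ⊓ A ⊓ H = A ⊓ H ⊓ K := by
          rw [inf_comm K A, inf_assoc, inf_comm K H, ← inf_assoc]
        rw [this]
        rw [inf_comm K A]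
        omega

end Aux

/-- Let `𝒜` be a finite central hyperplane arrangement in a finite-dimensional
ℂ-vector space `V` and `Y` a 1-dimensional subspace.  If `X + Y ∈ L(𝒜)` for all
`X ∈ L(𝒜)` of codimension 2, then `X + Y ∈ L(𝒜)` for all `X ∈ L(𝒜)`. -/
theorem good_of_rank_two_closed {V : Type*} [AddCommGroup V] [Module ℂ V]
    [FiniteDimensional ℂ V] (𝒜 : Set (Submodule ℂ V)) (hfin : 𝒜.Finite)
    (hhyp : ∀ H ∈ 𝒜, finrank ℂ ↥H + 1 = finrank ℂ V)
    (Y : Submodule ℂ V) (hY : finrank ℂ ↥Y = 1)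
    (h2 : ∀ X : Submodule ℂ V, (∃ s ⊆ 𝒜, X = sInf s) →
      finrank ℂ ↥X + 2 = finrank ℂ V → ∃ s ⊆ 𝒜, X ⊔ Y = sInf s) :
    ∀ X : Submodule ℂ V, (∃ s ⊆ 𝒜, X = sInf s) → ∃ s ⊆ 𝒜, X ⊔ Y = sInf s := by
  classical
  suffices h : ∀ c : ℕ, ∀ X : Submodule ℂ V, finrank ℂ V - finrank ℂ ↥X ≤ c →
      (∃ s ⊆ 𝒜, X = sInf s) → ∃ s ⊆ 𝒜, X ⊔ Y = sInf s by
    exact fun X hX => h (finrank ℂ V) X (Nat.sub_le _ _) hX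
  intro c
  induction c with
  | zero =>
    intro X hcodim hX
    have hXle := Submodule.finrank_le X
    have hXtop : X = ⊤ := Submodule.eq_top_of_finrank_eq (by omega)
    exact ⟨∅, Set.empty_subset _, by rw [hXtop, top_sup_eq, sInf_empty]⟩
  | succ c ih =>
    intro X hcodim hX
    obtain ⟨s, hs, hXs⟩ := hX
    have hXle := Submodule.finrank_le X
    by_cases hYX : Y ≤ X
    · exact ⟨s, hs, by rw [sup_eq_left.mpr hYX, hXs]⟩
    -- case on the codimension of X
    by_cases hd0 : finrank ℂ V ≤ finrank ℂ ↥X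
    · -- codimension 0 : X = ⊤
      have hXtop : X = ⊤ := Submodule.eq_top_of_finrank_eq (by omega)
      exact ⟨∅, Set.empty_subset _, by rw [hXtop, top_sup_eq, sInf_empty]⟩
    by_cases hd1 : finrank ℂ V = finrank ℂ ↥X + 1
    · -- codimension 1 : X ⊔ Y = ⊤
      have hsup : finrank ℂ ↥(X ⊔ Y) = finrank ℂ ↥X + 1 := aux_sup_line hY hYX
      have htop : X ⊔ Y = ⊤ := Submodule.eq_top_of_finrank_eq (by omega)
      exact ⟨∅, Set.empty_subset _, by rw [htop, sInf_empty]⟩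
    by_cases hd2 : finrank ℂ V = finrank ℂ ↥X + 2
    · -- codimension 2 : the hypothesis
      exact h2 X ⟨s, hs, hXs⟩ hd2.symm
    -- codimension ≥ 3
    have hd3 : finrank ℂ ↥X + 3 ≤ finrank ℂ V := by omega
    have hsfin : s.Finite := hfin.subset hs
    set S : Finset (Submodule ℂ V) := hsfin.toFinset with hSdef
    have hScoe : (↑S : Set (Submodule ℂ V)) = s := hsfin.coe_toFinset
    have hSsub : (↑S : Set (Submodule ℂ V)) ⊆ 𝒜 := hScoe ▸ hs
    have hXS : X = sInf (↑S : Set (Submodule ℂ V)) := by rw [hScoe, hXs]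
    -- Step 1 : find Z ∈ L(𝒜) of codimension 2 with X ≤ Z
    obtain ⟨s₂, hs₂S, hZrank⟩ := aux_chain hhyp S hSsub (finrank ℂ V - 2)
      (by rw [← hXS]; omega) (by omega)
    set Z := sInf (↑s₂ : Set (Submodule ℂ V)) with hZdef
    have hXZ : X ≤ Z := by
      rw [hXS]
      exact sInf_le_sInf (Finset.coe_subset.mpr hs₂S)
    -- Step 2 : Z ⊔ Y ∈ L(𝒜), and it is contained in some hyperplane H ∈ 𝒜
    have hZ𝒜 : (↑s₂ : Set (Submodule ℂ V)) ⊆ 𝒜 := (Finset.coe_subset.mpr hs₂S).trans hSsub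
    obtain ⟨u, hu, hZY⟩ := h2 Z ⟨↑s₂, hZ𝒜, rfl⟩ (by omega)
    have hZYtop : Z ⊔ Y ≠ ⊤ := by
      intro htop
      have h := Submodule.finrank_sup_add_finrank_inf_eq Z Y
      rw [htop, finrank_top] at h
      omega
    have hune : u.Nonempty := by
      rcases Set.eq_empty_or_nonempty u with he | hne
      · rw [he, sInf_empty] at hZY; exact absurd hZY hZYtop
      · exact hne
    obtain ⟨H, hHu⟩ := hune
    have hH𝒜 : H ∈ 𝒜 := hu hHu
    have hZYH : Z ⊔ Y ≤ H := hZY ▸ sInf_le hHu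
    have hXH : X ≤ H := (hXZ.trans le_sup_left).trans hZYH
    have hYH : Y ≤ H := le_sup_right.trans hZYH
    -- Step 3 : write X = X' ⊓ H with X' ∈ L(𝒜) of codimension one less
    obtain ⟨t, htS, hth, htr⟩ := aux_extract hhyp (hhyp H hH𝒜) S hSsub
    set X' := sInf (↑t : Set (Submodule ℂ V)) with hX'def
    have hSXH : sInf (↑S : Set (Submodule ℂ V)) ⊓ H = X := by
      rw [← hXS]; exact inf_eq_left.mpr hXH
    have hX'H : X' ⊓ H = X := by rw [hth, hSXH]
    have hX'rank : finrank ℂ ↥X' = finrank ℂ ↥X + 1 := by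
      rw [← htr, hX'H]
    -- Step 4 : induction hypothesis applied to X'
    have hXX' : X ≤ X' := hX'H ▸ inf_le_left
    obtain ⟨w, hw, hX'Y⟩ := ih X' (by omega)
      ⟨↑t, (Finset.coe_subset.mpr htS).trans hSsub, rfl⟩
    -- Step 5 : X ⊔ Y = (X' ⊔ Y) ⊓ H
    have hYX' : ¬ Y ≤ X' := by
      intro h
      exact hYX (hX'H ▸ le_inf h hYH)
    have hX'YH : ¬ (X' ⊔ Y) ≤ H := by
      intro h
      have hX'leH : X' ≤ H := le_sup_left.trans h
      have : X' ⊓ H = X' := inf_eq_left.mpr hX'leH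
      rw [hX'H] at this
      have hfr : finrank ℂ ↥(X : Submodule ℂ V) = finrank ℂ ↥X' := by rw [this]
      omega
    have f1 : finrank ℂ ↥(X ⊔ Y) = finrank ℂ ↥X + 1 := aux_sup_line hY hYX
    have f2 : finrank ℂ ↥(X' ⊔ Y) = finrank ℂ ↥X + 2 := by
      rw [aux_sup_line hY hYX', hX'rank]
    have f3 : finrank ℂ ↥((X' ⊔ Y) ⊓ H) + 1 = finrank ℂ ↥(X' ⊔ Y) :=
      aux_inf_hyp_eq (hhyp H hH𝒜) hX'YH
    have hle : X ⊔ Y ≤ (X' ⊔ Y) ⊓ H :=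
      sup_le (le_inf (hXX'.trans le_sup_left) hXH) (le_inf le_sup_right hYH)
    have heq : X ⊔ Y = (X' ⊔ Y) ⊓ H :=
      Submodule.eq_of_le_of_finrank_eq hle (by omega)
    refine ⟨insert H w, Set.insert_subset_iff.mpr ⟨hH𝒜, hw⟩, ?_⟩
    rw [sInf_insert, ← hX'Y, heq, inf_comm]
end

section
/- Let A be a k×k complex matrix with no nonzero integer eigenvalue. Then Ker(exp(2πi·A) − I) = Ker(A). -/
/-!
Write `exp X - 1 = φ(X) * X` with `φ(z) = (exp z - 1) / z = ∑ zⁿ / (n + 1)!`; the matrix `φ(X)`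
commutes with `X`, so `Ker (exp X - 1) = Ker X` as soon as `φ(X)` is injective. The kernel of
`φ(X)` is `X`-invariant, so if it is nonzero it contains an eigenvector `v` of `X`, say with
eigenvalue `ν`; then `φ(ν) • v = φ(X) v = 0`, which forces `ν ≠ 0` and `exp ν = 1`. For
`X = 2πi • A` this makes `ν / 2πi` a nonzero integer eigenvalue of `A`.
-/

open Module NormedSpace

open scoped Nat Matrix

section TopologicalAlgebra

variable (𝕂 : Type*) {𝔸 : Type*} [Field 𝕂] [Ring 𝔸] [Algebra 𝕂 𝔸] [TopologicalSpace 𝔸]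

/-- `(exp x - 1) / x`, written as a power series so that it makes sense in any algebra. -/
noncomputable def expSubOneDiv (x : 𝔸) : 𝔸 :=
  ∑' n : ℕ, ((n + 1)! : 𝕂)⁻¹ • x ^ n

theorem expSubOneDiv_zero : expSubOneDiv 𝕂 (0 : 𝔸) = 1 := by
  rw [expSubOneDiv, tsum_eq_single 0 fun n hn => by rw [zero_pow hn, smul_zero]]
  simp

theorem commute_expSubOneDiv [IsTopologicalRing 𝔸] [T2Space 𝔸] (x : 𝔸) :
    Commute x (expSubOneDiv 𝕂 x) :=
  Commute.tsum_right x fun n => ((Commute.refl x).pow_right n).smul_right _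

end TopologicalAlgebra

section Normed

variable (𝕂 : Type*) {𝔸 : Type*} [RCLike 𝕂] [NormedRing 𝔸] [NormedAlgebra 𝕂 𝔸] [CompleteSpace 𝔸]

theorem hasSum_expSubOneDiv (x : 𝔸) :
    HasSum (fun n : ℕ => ((n + 1)! : 𝕂)⁻¹ • x ^ n) (expSubOneDiv 𝕂 x) := by
  refine (Summable.of_norm_bounded (norm_expSeries_summable' (𝕂 := 𝕂) x) fun n => ?_).hasSum
  rw [norm_smul, norm_smul, norm_inv, norm_inv, RCLike.norm_natCast, RCLike.norm_natCast]
  gcongr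
  exact n.le_succ

theorem exp_eq_one_add_mul_expSubOneDiv (x : 𝔸) : exp x = 1 + x * expSubOneDiv 𝕂 x := by
  have h : HasSum (fun n : ℕ => ((n + 1)! : 𝕂)⁻¹ • x ^ (n + 1)) (x * expSubOneDiv 𝕂 x) := by
    simpa only [mul_smul_comm, ← pow_succ'] using (hasSum_expSubOneDiv 𝕂 x).mul_left x
  have h' := HasSum.zero_add (f := fun n : ℕ => (n ! : 𝕂)⁻¹ • x ^ n) h
  simpa using (exp_series_hasSum_exp' (𝕂 := 𝕂) x).unique h'

variable {𝕂} in
theorem expSubOneDiv_eq_zero_iff {z : 𝕂} : expSubOneDiv 𝕂 z = 0 ↔ z ≠ 0 ∧ exp z = 1 := by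
  rw [exp_eq_one_add_mul_expSubOneDiv 𝕂 z, add_eq_left, mul_eq_zero]
  constructor
  · intro h
    have hz : z ≠ 0 := by rintro rfl; simp [expSubOneDiv_zero] at h
    exact ⟨hz, .inr h⟩
  · rintro ⟨hz, h⟩
    exact h.resolve_left hz

end Normed

section Eigenvectors

variable {K V : Type*} [Field K] [AddCommGroup V] [Module K V]

theorem Module.End.eigenspace_smul (f : End K V) {c : K} (hc : c ≠ 0) (μ : K) :
    (c • f).eigenspace (c * μ) = f.eigenspace μ := by
  ext v
  simp only [Module.End.mem_eigenspace_iff, LinearMap.smul_apply, mul_smul]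
  exact (smul_right_injective V hc).eq_iff

theorem Module.End.hasEigenvalue_smul_iff {f : End K V} {c μ : K} (hc : c ≠ 0) :
    (c • f).HasEigenvalue (c * μ) ↔ f.HasEigenvalue μ := by
  rw [Module.End.hasEigenvalue_iff, Module.End.hasEigenvalue_iff, f.eigenspace_smul hc]

theorem Module.End.exists_hasEigenvector_mem_ker_of_commute [IsAlgClosed K]
    [FiniteDimensional K V] {f g : End K V} (hfg : Commute f g) (hg : LinearMap.ker g ≠ ⊥) :
    ∃ μ v, f.HasEigenvector μ v ∧ g v = 0 := by
  have hfker : ∀ v ∈ LinearMap.ker g, f v ∈ LinearMap.ker g := fun v hv => by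
    rw [LinearMap.mem_ker] at hv ⊢
    rw [← Module.End.mul_apply, ← hfg.eq, Module.End.mul_apply, hv, map_zero]
  have : Nontrivial (LinearMap.ker g) := Submodule.nontrivial_iff_ne_bot.mpr hg
  obtain ⟨μ, hμ⟩ := Module.End.exists_eigenvalue (f.restrict hfker)
  obtain ⟨w, hw⟩ := hμ.exists_hasEigenvector
  refine ⟨μ, w, ⟨f.eigenspace_restrict_le_eigenspace hfker μ ⟨w, hw.1, rfl⟩, ?_⟩, w.2⟩
  exact_mod_cast hw.2

end Eigenvectors

section Matrix

variable {n : Type*} [Fintype n] [DecidableEq n]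

nonrec theorem Matrix.hasSum_expSubOneDiv {𝕂 : Type*} [RCLike 𝕂] (B : Matrix n n 𝕂) :
    HasSum (fun k : ℕ => ((k + 1)! : 𝕂)⁻¹ • B ^ k) (expSubOneDiv 𝕂 B) :=
  open scoped Matrix.Norms.Operator in hasSum_expSubOneDiv 𝕂 B

nonrec theorem Matrix.exp_eq_one_add_mul_expSubOneDiv {𝕂 : Type*} [RCLike 𝕂]
    (B : Matrix n n 𝕂) : exp B = 1 + B * expSubOneDiv 𝕂 B :=
  open scoped Matrix.Norms.Operator in exp_eq_one_add_mul_expSubOneDiv 𝕂 B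

theorem Matrix.exp_sub_one_eq_expSubOneDiv_mul {𝕂 : Type*} [RCLike 𝕂] (B : Matrix n n 𝕂) :
    exp B - 1 = expSubOneDiv 𝕂 B * B := by
  rw [Matrix.exp_eq_one_add_mul_expSubOneDiv B, add_sub_cancel_left,
    (commute_expSubOneDiv 𝕂 B).eq]

theorem Matrix.expSubOneDiv_mulVec_of_mulVec_eq_smul {𝕂 : Type*} [RCLike 𝕂]
    {B : Matrix n n 𝕂} {z : 𝕂} {v : n → 𝕂} (hv : B *ᵥ v = z • v) :
    expSubOneDiv 𝕂 B *ᵥ v = expSubOneDiv 𝕂 z • v := by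
  have hpow : ∀ k : ℕ, B ^ k *ᵥ v = z ^ k • v := fun k => by
    induction k with
    | zero => simp
    | succ k ih =>
      rw [pow_succ', ← Matrix.mulVec_mulVec, ih, Matrix.mulVec_smul, hv, smul_smul, ← pow_succ]
  have hB : HasSum (fun k : ℕ => (((k + 1)! : 𝕂)⁻¹ • B ^ k) *ᵥ v) (expSubOneDiv 𝕂 B *ᵥ v) :=
    (Matrix.hasSum_expSubOneDiv B).map (Matrix.mulVec.addMonoidHomLeft v)
      (continuous_id.matrix_mulVec continuous_const)
  simp only [Matrix.smul_mulVec, hpow, smul_smul] at hB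
  exact hB.unique ((_root_.hasSum_expSubOneDiv 𝕂 z).smul_const v)

theorem Matrix.ker_mulVecLin_expSubOneDiv_eq_bot {B : Matrix n n ℂ}
    (hB : ∀ z, End.HasEigenvalue B.mulVecLin z → Complex.exp z = 1 → z = 0) :
    LinearMap.ker (expSubOneDiv ℂ B).mulVecLin = ⊥ := by
  by_contra hker
  obtain ⟨μ, v, hv, hv0⟩ := End.exists_hasEigenvector_mem_ker_of_commute
    ((commute_expSubOneDiv ℂ B).map Matrix.toLinAlgEquiv') hker
  have hμ : expSubOneDiv ℂ μ • v = 0 := by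
    rw [← Matrix.expSubOneDiv_mulVec_of_mulVec_eq_smul hv.apply_eq_smul]
    exact hv0
  obtain ⟨hμ0, hexp⟩ := expSubOneDiv_eq_zero_iff.mp ((smul_eq_zero.mp hμ).resolve_right hv.2)
  exact hμ0 (hB μ (End.hasEigenvalue_of_hasEigenvector hv) (by rwa [Complex.exp_eq_exp_ℂ]))

theorem Matrix.ker_exp_sub_one_eq_ker {B : Matrix n n ℂ}
    (hB : ∀ z, End.HasEigenvalue B.mulVecLin z → Complex.exp z = 1 → z = 0) :
    LinearMap.ker (exp B - 1).mulVecLin = LinearMap.ker B.mulVecLin := by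
  rw [Matrix.exp_sub_one_eq_expSubOneDiv_mul, Matrix.mulVecLin_mul,
    LinearMap.ker_comp_of_ker_eq_bot _ (Matrix.ker_mulVecLin_expSubOneDiv_eq_bot hB)]

end Matrix

/-- Let `A` be a `k × k` complex matrix with no nonzero integer eigenvalue.
Then `Ker (exp (2πi • A) − I) = Ker A`. -/
theorem ker_exp_sub_one_eq_ker {k : ℕ} (A : Matrix (Fin k) (Fin k) ℂ)
    (hA : ∀ m : ℤ, m ≠ 0 → ¬ Module.End.HasEigenvalue A.mulVecLin (m : ℂ)) :
    LinearMap.ker (NormedSpace.exp ((2 * Real.pi * Complex.I) • A) - 1).mulVecLin =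
      LinearMap.ker A.mulVecLin := by
  have hc : 2 * Real.pi * Complex.I ≠ 0 := Complex.two_pi_I_ne_zero
  have hsmul : ((2 * Real.pi * Complex.I) • A).mulVecLin =
      (2 * Real.pi * Complex.I) • A.mulVecLin :=
    map_smul (Matrix.mulVecBilin ℂ ℂ) _ A
  rw [Matrix.ker_exp_sub_one_eq_ker, hsmul, LinearMap.ker_smul _ _ hc]
  intro z hz hexp
  obtain ⟨m, rfl⟩ := Complex.exp_eq_one_iff.mp hexp
  rw [hsmul, mul_comm (m : ℂ), Module.End.hasEigenvalue_smul_iff hc] at hz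
  obtain rfl : m = 0 := by_contra fun hm => hA m hm hz
  simp
end
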